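/- arXiv:1512.02378 — 5 statements merged into one kernel-verified Lean document; each statement's English description precedes it below -/
import Mathlib

section
/- Let m_1 < m_2 < … < m_j be positive integers with j ≥ 2, and let m be a positive integer lying in the numerical semigroup generated by m_1, …, m_j. Then there exist nonnegative integers α, β, γ such that m = γ·m_j − β·m_2 − α·m_1 with α < m_j and β < m_j. Moreover, if j = 2, then β can be taken to be 0. -/
/-!
Each `m i` with `3 ≤ i ≤ j` is a combination of earlier generators, so by strong induction all
generators, and hence `M`, lie in the semigroup generated by `m 1` and `m 2` alone:
`M = a * m 1 + b * m 2`. Adding `α * m 1` and `β * m 2`, where `α, β < m j` complete `a, b` to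
multiples of `m j`, turns the right-hand side into a multiple of `m j`.
-/

open Submodule

theorem Nat.exists_add_lt_eq_mul (a : ℕ) {n : ℕ} (hn : 0 < n) :
    ∃ α q, a + α = q * n ∧ α < n := by
  refine ⟨(n - a % n) % n, (a + (n - a % n) % n) / n, ?_, Nat.mod_lt _ hn⟩
  refine (Nat.div_mul_cancel (Nat.dvd_of_mod_eq_zero ?_)).symm
  have hsum : a + (n - a % n) = n * (a / n + 1) := by
    have := Nat.div_add_mod a n
    have := Nat.mod_lt a hn
    rw [Nat.mul_succ]
    omega
  rw [Nat.add_mod_mod, hsum, Nat.mul_mod_right]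

theorem mem_span_pair_of_forall_eq_sum_Icc {j : ℕ} {m : ℕ → ℕ}
    (hrec : ∀ i, 3 ≤ i → i ≤ j → ∃ A : ℕ → ℕ, m i = ∑ k ∈ Finset.Icc 1 (i - 1), A k * m k) :
    ∀ i, 1 ≤ i → i ≤ j → m i ∈ span ℕ {m 1, m 2} := by
  intro i
  induction i using Nat.strong_induction_on with
  | _ i ih =>
    intro hi1 hij
    rcases (by omega : i = 1 ∨ i = 2 ∨ 3 ≤ i) with rfl | rfl | hi3
    · exact subset_span (by simp)
    · exact subset_span (by simp)
    obtain ⟨A, hA⟩ := hrec i hi3 hij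
    rw [hA]
    refine sum_mem fun k hk => ?_
    rw [Finset.mem_Icc] at hk
    exact smul_mem _ (A k) (ih k (by omega) hk.1 (by omega))

theorem exists_add_mul_add_mul_eq_mul (a b x y : ℕ) {n : ℕ} (hn : 0 < n) :
    ∃ α β γ, a * x + b * y + β * y + α * x = γ * n ∧ α < n ∧ β < n := by
  obtain ⟨α, q, hq, hα⟩ := Nat.exists_add_lt_eq_mul a hn
  obtain ⟨β, p, hp, hβ⟩ := Nat.exists_add_lt_eq_mul b hn
  refine ⟨α, β, q * x + p * y, ?_, hα, hβ⟩
  calc a * x + b * y + β * y + α * x = (a + α) * x + (b + β) * y := by ring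
    _ = (q * x + p * y) * n := by rw [hq, hp]; ring

theorem exists_add_mul_eq_mul (a b x : ℕ) {y : ℕ} (hy : 0 < y) :
    ∃ α γ, a * x + b * y + α * x = γ * y ∧ α < y := by
  obtain ⟨α, q, hq, hα⟩ := Nat.exists_add_lt_eq_mul a hy
  refine ⟨α, q * x + b, ?_, hα⟩
  calc a * x + b * y + α * x = (a + α) * x + b * y := by ring
    _ = (q * x + b) * y := by rw [hq]; ring

theorem stmt_1_general (j : ℕ) (hj : 2 ≤ j) (m : ℕ → ℕ)
    (hpos : ∀ i, 1 ≤ i → i ≤ j → 0 < m i)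
    (hrec : ∀ i, 3 ≤ i → i ≤ j →
      ∃ A : ℕ → ℕ, m i = ∑ k ∈ Finset.Icc 1 (i - 1), A k * m k)
    (M : ℕ)
    (hmem : ∃ A : ℕ → ℕ, M = ∑ k ∈ Finset.Icc 1 j, A k * m k) :
    (∃ α β γ : ℕ, M + β * m 2 + α * m 1 = γ * m j ∧ α < m j ∧ β < m j) ∧
      (j = 2 → ∃ α γ : ℕ, M + α * m 1 = γ * m 2 ∧ α < m 2) := by
  obtain ⟨A, rfl⟩ := hmem
  have hM : ∑ k ∈ Finset.Icc 1 j, A k * m k ∈ span ℕ {m 1, m 2} := by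
    refine sum_mem fun k hk => smul_mem _ (A k) ?_
    rw [Finset.mem_Icc] at hk
    exact mem_span_pair_of_forall_eq_sum_Icc hrec k hk.1 hk.2
  obtain ⟨a, b, hab⟩ := mem_span_pair.mp hM
  simp only [smul_eq_mul] at hab
  rw [← hab]
  refine ⟨exists_add_mul_add_mul_eq_mul a b _ _ (hpos j (by omega) le_rfl), ?_⟩
  rintro rfl
  exact exists_add_mul_eq_mul a b _ (hpos 2 (by omega) le_rfl)

/-- Lemma 1, part (II), of the paper, for a recursive extension: if
`m 1 < m 2 < … < m j` are positive integers (`j ≥ 2`) with each `m i`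
(`3 ≤ i ≤ j`) in the numerical semigroup generated by `m 1, …, m (i-1)`,
and `M` is a positive integer in the numerical semigroup generated by
`m 1, …, m j`, then `M = γ * m j - β * m 2 - α * m 1` (written additively)
with `α, β < m j`; moreover if `j = 2` one can take `β = 0`. -/
theorem stmt_1 (j : ℕ) (hj : 2 ≤ j) (m : ℕ → ℕ)
    (hpos : ∀ i, 1 ≤ i → i ≤ j → 0 < m i)
    (hmono : ∀ i, 1 ≤ i → i < j → m i < m (i + 1))
    (hrec : ∀ i, 3 ≤ i → i ≤ j →
      ∃ A : ℕ → ℕ, m i = ∑ k ∈ Finset.Icc 1 (i - 1), A k * m k)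
    (M : ℕ) (hM : 0 < M)
    (hmem : ∃ A : ℕ → ℕ, M = ∑ k ∈ Finset.Icc 1 j, A k * m k) :
    (∃ α β γ : ℕ, M + β * m 2 + α * m 1 = γ * m j ∧ α < m j ∧ β < m j) ∧
      (j = 2 → ∃ α γ : ℕ, M + α * m 1 = γ * m 2 ∧ α < m 2) :=
  stmt_1_general j hj m hpos hrec M hmem
end

section
/- Let m_1 < m_2 < m' be positive integers and let a, b, c be nonnegative integers with a < m', b < m', and m := c·m' + b·m_2 + a·m_1. Define α = 0 if a = 0 and α = m' − a if a > 0; define β = 0 if b = 0 and β = m' − b if b > 0; define γ = c if a = 0 and b = 0, γ = c + m_2 if a = 0 and b > 0, γ = c + m_1 if a > 0 and b = 0, and γ = c + m_2 + m_1 if a > 0 and b > 0. Assume γ − β − α − 1 ≥ 0. Then for every integer k with m' − m_1 + 1 ≤ k ≤ m', one has h_0(k) := k·(a + b + c − 1) − b·(m' − m_2) − a·(m' − m_1) ≥ 0. -/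
/-!
Write `p = m' - m₁`, `q = m' - m₂`, so `q ≤ p < k`. Then
`h₀(k) = a(k - p) + b(k - q) + k(c - 1)` with both `k - p` and `k - q` positive, so it suffices
that one of `c ≥ 1`, `a(k - p) ≥ k`, `b(k - q) ≥ k` holds; the last two hold as soon as
`a > p`, resp. `b > q`. When `c = 0`, `a ≤ p` and `b ≤ q`, each nonzero one of `a, b`
contributes at least as much to `α + β` as to `γ`, contradicting `β + α + 1 ≤ γ`.
-/

lemma add_le_mul_of_lt {d x u : ℤ} (hd : 0 ≤ d) (hdx : d < x) (hu : 1 ≤ u) :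
    d + u ≤ x * u := by
  nlinarith [mul_le_mul_of_nonneg_left hu (by linarith : (0 : ℤ) ≤ x - 1)]

lemma exponent_nonneg_of_lt {a b c k p q : ℤ} (ha : 0 ≤ a) (hb : 0 ≤ b) (hc : 0 ≤ c)
    (hq : 0 ≤ q) (hqp : q ≤ p) (hpk : p < k) (h : 1 ≤ c ∨ p < a ∨ q < b) :
    0 ≤ k * (a + b + c - 1) - b * q - a * p := by
  have hsplit : k * (a + b + c - 1) - b * q - a * p = a * (k - p) + b * (k - q) + k * (c - 1) := by
    ring
  have hap : 0 ≤ a * (k - p) := mul_nonneg ha (by linarith)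
  have hbq : 0 ≤ b * (k - q) := mul_nonneg hb (by linarith)
  rw [hsplit]
  rcases h with hc1 | hpa | hqb
  · nlinarith [mul_nonneg (by linarith : (0 : ℤ) ≤ k) (by linarith : (0 : ℤ) ≤ c - 1)]
  · nlinarith [add_le_mul_of_lt (by linarith) hpa (by linarith : 1 ≤ k - p)]
  · nlinarith [add_le_mul_of_lt hq hqb (by linarith : 1 ≤ k - q)]

lemma one_le_or_lt_of_add_add_one_le {m1 m2 m' a b c : ℕ}
    (h : (if b = 0 then 0 else m' - b) + (if a = 0 then 0 else m' - a) + 1 ≤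
      if a = 0 then (if b = 0 then c else c + m2)
      else (if b = 0 then c + m1 else c + m2 + m1)) :
    1 ≤ c ∨ m' - m1 < a ∨ m' - m2 < b := by
  split_ifs at h <;> omega

theorem stmt_4_general (m1 m2 m' a b c : ℕ) (h12 : m1 < m2) (h2 : m2 < m')
    (α β γ : ℕ)
    (hα : α = if a = 0 then 0 else m' - a)
    (hβ : β = if b = 0 then 0 else m' - b)
    (hγ : γ = if a = 0 then (if b = 0 then c else c + m2)
              else (if b = 0 then c + m1 else c + m2 + m1))
    (hγβα : β + α + 1 ≤ γ) :
    ∀ k : ℕ, m' - m1 + 1 ≤ k → k ≤ m' →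
      0 ≤ (k : ℤ) * ((a : ℤ) + (b : ℤ) + (c : ℤ) - 1) -
          (b : ℤ) * ((m' : ℤ) - (m2 : ℤ)) - (a : ℤ) * ((m' : ℤ) - (m1 : ℤ)) := by
  intro k hk _
  subst hα hβ hγ
  have h := one_le_or_lt_of_add_add_one_le hγβα
  apply exponent_nonneg_of_lt (by positivity) (by positivity) (by positivity) <;> omega

/-- From the proof of Lemma 2 of the paper: the exponents
`h₀(k) = k(a+b+c-1) - b(m'-m₂) - a(m'-m₁)` of `x₀` appearing in `H_{i-1}` are
nonnegative for `m' - m₁ + 1 ≤ k ≤ m'`, where `α, β, γ` are obtained from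
`a, b, c` by the formulas of Lemma 1 and `γ - β - α - 1 ≥ 0`. -/
theorem stmt_4 (m1 m2 m' a b c : ℕ) (h1 : 0 < m1) (h12 : m1 < m2) (h2 : m2 < m')
    (ha : a < m') (hb : b < m') (m : ℕ) (hm : m = c * m' + b * m2 + a * m1)
    (α β γ : ℕ)
    (hα : α = if a = 0 then 0 else m' - a)
    (hβ : β = if b = 0 then 0 else m' - b)
    (hγ : γ = if a = 0 then (if b = 0 then c else c + m2)
              else (if b = 0 then c + m1 else c + m2 + m1))
    (hγβα : β + α + 1 ≤ γ) :
    ∀ k : ℕ, m' - m1 + 1 ≤ k → k ≤ m' →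
      0 ≤ (k : ℤ) * ((a : ℤ) + (b : ℤ) + (c : ℤ) - 1) -
          (b : ℤ) * ((m' : ℤ) - (m2 : ℤ)) - (a : ℤ) * ((m' : ℤ) - (m1 : ℤ)) :=
  stmt_4_general m1 m2 m' a b c h12 h2 α β γ hα hβ hγ hγβα
end

section
/- Let K be a commutative ring, let m_1 < m_2 < … < m_n be positive integers, fix 3 ≤ i ≤ n, and let a, b, c, α, β, γ be nonnegative integers with m_i = c·m_{i−1} + b·m_2 + a·m_1 = γ·m_{i−1} − β·m_2 − α·m_1, γ − β − α − 1 ≥ 0, and m_1 ≥ β·(m_2 − m_1). Then for all t, y ∈ K, substituting x_0 = 1, x_j = t^{m_j} for 1 ≤ j ≤ i − 1, and x_i = y into F_{i−1} yields (t^{m_i} − y)^{m_{i−1}}. -/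
/-!
After the substitution every monomial of `F_{i-1}` becomes a signed binomial coefficient times
`t^e y^k`, and the relations `m_i = c m_{i-1} + b m_2 + a m_1` and
`m_i + β m_2 + α m_1 = γ m_{i-1}` give `e = m_i (m_{i-1} - k)` in each of the two ranges of `k`.
So the substituted polynomial is the binomial expansion of `(t^{m_i} - y)^{m_{i-1}}`, split as
`k = 0`, `1 ≤ k ≤ m_{i-1} - m_1` and `m_{i-1} - m_1 < k ≤ m_{i-1}`. In the first range the
natural-number exponent `m_i - kγ` is exact, i.e. `kγ ≤ m_i`: from `γ ≥ β + α + 1` and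
`m_1 ≥ β (m_2 - m_1)` one gets `β m_2 + α m_1 ≤ γ m_1`, hence
`kγ ≤ γ (m_{i-1} - m_1) ≤ γ m_{i-1} - β m_2 - α m_1 = m_i`.
-/

/-- The polynomial `F_{i-1} = x_{i-1}^{m_i} + G_{i-1} + H_{i-1}` of Lemma 2 of the
paper, with coefficients in a commutative ring `K`, in variables `x_j` indexed by
`j : ℕ` (only `x_0, x_1, x_2, x_{i-1}, x_i` occur). -/
noncomputable def Fpoly (K : Type*) [CommRing K] (m : ℕ → ℕ)
    (i a b c α β γ : ℕ) : MvPolynomial ℕ K :=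
  MvPolynomial.X (i - 1) ^ m i
    + ∑ k ∈ Finset.Icc 1 (m (i - 1) - m 1),
        MvPolynomial.C ((-1 : K) ^ k * ((m (i - 1)).choose k : K)) *
          (MvPolynomial.X 1 ^ (k * α) * MvPolynomial.X 2 ^ (k * β) *
            MvPolynomial.X (i - 1) ^ (m i - k * γ) * MvPolynomial.X i ^ k *
            MvPolynomial.X 0 ^ (k * (γ - β - α - 1)))
    + ∑ k ∈ Finset.Icc (m (i - 1) - m 1 + 1) (m (i - 1)),
        MvPolynomial.C ((-1 : K) ^ k * ((m (i - 1)).choose k : K)) *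
          (MvPolynomial.X 1 ^ (a * (m (i - 1) - k)) *
            MvPolynomial.X 2 ^ (b * (m (i - 1) - k)) *
            MvPolynomial.X (i - 1) ^ (c * (m (i - 1) - k)) * MvPolynomial.X i ^ k *
            MvPolynomial.X 0 ^
              (k * (a + b + c - 1) - b * (m (i - 1) - m 2) - a * (m (i - 1) - m 1)))

open Finset

theorem sub_pow_eq_sum_range {R : Type*} [CommRing R] (x y : R) (n : ℕ) :
    (x - y) ^ n = ∑ k ∈ range (n + 1), (-1) ^ k * (n.choose k : R) * (x ^ (n - k) * y ^ k) := by
  rw [sub_eq_add_neg, add_comm, add_pow]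
  refine sum_congr rfl fun k _ => ?_
  rw [neg_pow]
  ring

theorem sum_range_succ_eq_add_sum_Icc_add_sum_Icc {M : Type*} [AddCommMonoid M] (f : ℕ → M)
    {N n : ℕ} (h : N ≤ n) :
    ∑ k ∈ range (n + 1), f k = f 0 + ∑ k ∈ Icc 1 N, f k + ∑ k ∈ Icc (N + 1) n, f k := by
  rw [range_eq_Ico, sum_eq_sum_Ico_succ_bot n.succ_pos, add_assoc, ← Ico_add_one_right_eq_Icc,
    ← Ico_add_one_right_eq_Icc, sum_Ico_consecutive _ (by omega) (by omega), zero_add]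
  rfl

theorem mul_le_of_le_sub {m₁ m₂ M mᵢ α β γ k : ℕ} (h12 : m₁ ≤ m₂) (h2M : m₂ ≤ M)
    (heq : mᵢ + β * m₂ + α * m₁ = γ * M) (hγ : β + α + 1 ≤ γ) (hβ : β * (m₂ - m₁) ≤ m₁)
    (hk : k ≤ M - m₁) : k * γ ≤ mᵢ := by
  obtain ⟨d, rfl⟩ := Nat.exists_eq_add_of_le h12
  obtain ⟨e, rfl⟩ := Nat.exists_eq_add_of_le h2M
  rw [Nat.add_sub_cancel_left] at hβ
  rw [add_assoc, Nat.add_sub_cancel_left] at hk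
  have hweights : β * (m₁ + d) + α * m₁ ≤ γ * m₁ := by nlinarith
  nlinarith [Nat.mul_le_mul_right γ hk]

theorem mul_add_mul_add_mul_sub_eq_mul_sub {m₁ m₂ M mᵢ α β γ k : ℕ}
    (heq : mᵢ + β * m₂ + α * m₁ = γ * M) (hkM : k ≤ M) (hkγ : k * γ ≤ mᵢ) :
    m₁ * (k * α) + m₂ * (k * β) + M * (mᵢ - k * γ) = mᵢ * (M - k) := by
  zify [hkM, hkγ] at heq ⊢
  linear_combination (k : ℤ) * heq

theorem eval_Fpoly {K : Type*} [CommRing K] (m : ℕ → ℕ) {i : ℕ} (hi : 3 ≤ i)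
    (a b c α β γ : ℕ) (t y : K) :
    MvPolynomial.eval (fun j => if j = 0 then 1 else if j ≤ i - 1 then t ^ m j else y)
        (Fpoly K m i a b c α β γ) =
      t ^ (m (i - 1) * m i)
      + ∑ k ∈ Icc 1 (m (i - 1) - m 1), (-1) ^ k * ((m (i - 1)).choose k : K) *
          (t ^ (m 1 * (k * α) + m 2 * (k * β) + m (i - 1) * (m i - k * γ)) * y ^ k)
      + ∑ k ∈ Icc (m (i - 1) - m 1 + 1) (m (i - 1)), (-1) ^ k * ((m (i - 1)).choose k : K) *
          (t ^ (m 1 * (a * (m (i - 1) - k)) + m 2 * (b * (m (i - 1) - k))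
            + m (i - 1) * (c * (m (i - 1) - k))) * y ^ k) := by
  have h1 : 1 ≤ i - 1 := by omega
  have h2 : 2 ≤ i - 1 := by omega
  have hi0 : i - 1 ≠ 0 := by omega
  have hi' : ¬ i ≤ i - 1 := by omega
  simp only [Fpoly, map_add, map_sum, map_mul, map_pow, MvPolynomial.eval_X, MvPolynomial.eval_C,
    one_ne_zero, two_ne_zero, hi0, (show i ≠ 0 by omega), h1, h2, hi', le_refl, if_true, if_false,
    one_pow, mul_one, ← pow_mul, ← pow_add]

theorem stmt_8_general {K : Type*} [CommRing K] (n i : ℕ) (hi : 3 ≤ i) (hin : i ≤ n)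
    (m : ℕ → ℕ)
    (hmono : ∀ j, 1 ≤ j → j < n → m j < m (j + 1))
    (a b c α β γ : ℕ)
    (heq1 : m i = c * m (i - 1) + b * m 2 + a * m 1)
    (heq2 : m i + β * m 2 + α * m 1 = γ * m (i - 1))
    (hγ : β + α + 1 ≤ γ) (hβ : β * (m 2 - m 1) ≤ m 1) :
    ∀ t y : K,
      MvPolynomial.eval
        (fun j => if j = 0 then 1 else if j ≤ i - 1 then t ^ m j else y)
        (Fpoly K m i a b c α β γ) = (t ^ m i - y) ^ m (i - 1) := by
  intro t y
  have hm : StrictMonoOn m (Set.Icc 1 n) :=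
    strictMonoOn_of_lt_add_one Set.ordConnected_Icc fun j _ hj hj' => hmono j hj.1 hj'.2
  have h12 : m 1 ≤ m 2 := (hm ⟨le_rfl, by omega⟩ ⟨by omega, by omega⟩ one_lt_two).le
  have h2M : m 2 ≤ m (i - 1) := hm.monotoneOn ⟨by omega, by omega⟩ ⟨by omega, by omega⟩ (by omega)
  rw [eval_Fpoly m hi, sub_pow_eq_sum_range,
    sum_range_succ_eq_add_sum_Icc_add_sum_Icc (M := K) _ (Nat.sub_le (m (i - 1)) (m 1))]
  congr 2
  · simp [← pow_mul, mul_comm]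
  · refine sum_congr rfl fun k hk => ?_
    rw [mem_Icc] at hk
    rw [mul_add_mul_add_mul_sub_eq_mul_sub heq2 (hk.2.trans (Nat.sub_le _ _))
      (mul_le_of_le_sub h12 h2M heq2 hγ hβ hk.2), pow_mul]
  · ext k
    rw [heq1, ← pow_mul]
    ring_nf

/-- The key computation in the proof of Theorem 1 of the paper: substituting
`x_0 = 1`, `x_j = t^{m_j}` for `1 ≤ j ≤ i-1` and `x_i = y` into `F_{i-1}` yields
`(t^{m_i} - y)^{m_{i-1}}`. -/
theorem stmt_8 {K : Type*} [CommRing K] (n i : ℕ) (hi : 3 ≤ i) (hin : i ≤ n)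
    (m : ℕ → ℕ)
    (hpos : ∀ j, 1 ≤ j → j ≤ n → 0 < m j)
    (hmono : ∀ j, 1 ≤ j → j < n → m j < m (j + 1))
    (a b c α β γ : ℕ)
    (heq1 : m i = c * m (i - 1) + b * m 2 + a * m 1)
    (heq2 : m i + β * m 2 + α * m 1 = γ * m (i - 1))
    (hγ : β + α + 1 ≤ γ) (hβ : β * (m 2 - m 1) ≤ m 1) :
    ∀ t y : K,
      MvPolynomial.eval
        (fun j => if j = 0 then 1 else if j ≤ i - 1 then t ^ m j else y)
        (Fpoly K m i a b c α β γ) = (t ^ m i - y) ^ m (i - 1) :=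
  stmt_8_general n i hi hin m hmono a b c α β γ heq1 heq2 hγ hβ
end

section
/- Let K be a field and let m_1 < m_2 be coprime positive integers. If x_0 = 0 and x_1^{m_2} − x_2^{m_1} x_0^{m_2 − m_1} = 0, then x_1 = 0. More generally, in the setting of the paper's Theorem 1 (with polynomials F_1, …, F_{n−1} as defined there), if (0, x_1, …, x_n) ∈ K^{n+1} is a common zero of F_1, …, F_{n−1}, then x_1 = x_2 = … = x_{n−1} = 0; that is, the only common zeros with x_0 = 0 are the scalar multiples of the point (0, …, 0, 1). -/
open MvPolynomial Finset

theorem one_lt_of_eq_mul_of_lt {M m' γ : ℕ} (h : m' = γ * M) (hlt : M < m') : 1 < γ :=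
  Nat.lt_of_mul_lt_mul_right (a := M) (by rwa [one_mul, ← h])

theorem mul_sub_one_sub_mul_sub_sub_mul_sub_eq {M m₁ m₂ m' a b c : ℕ}
    (h₁ : m₁ ≤ M) (h₂ : m₂ ≤ M) (hlt : M < m') (h : m' = c * M + b * m₂ + a * m₁) :
    M * (a + b + c - 1) - b * (M - m₂) - a * (M - m₁) = m' - M := by
  have hpos : 1 ≤ a + b + c := by
    by_contra! h0
    obtain ⟨rfl, rfl, rfl⟩ : a = 0 ∧ b = 0 ∧ c = 0 := by omega
    omega
  have e₁ : M * (a + b + c - 1) = a * M + b * M + c * M - M := by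
    rw [Nat.mul_sub_one]; ring_nf
  have e₂ : b * m₂ ≤ b * M := Nat.mul_le_mul_left b h₂
  have e₃ : a * m₁ ≤ a * M := Nat.mul_le_mul_left a h₁
  rw [e₁, Nat.mul_sub, Nat.mul_sub]
  omega

section Fpoly

variable {K : Type*} [CommRing K] {m : ℕ → ℕ} {i a b c α β γ : ℕ} {x : ℕ → K}

theorem eval_Fpoly_eq_pow (hx0 : x 0 = 0) (hx1 : x 1 = 0)
    (hb : b ≠ 0 → x 2 = 0) (hβ : β ≠ 0 → x 2 = 0)
    (h₁ : m 1 ≤ m (i - 1)) (h₂ : m 2 ≤ m (i - 1)) (hlt : m (i - 1) < m i)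
    (hrep : m i = c * m (i - 1) + b * m 2 + a * m 1)
    (hrep' : m i + β * m 2 + α * m 1 = γ * m (i - 1)) :
    eval x (Fpoly K m i a b c α β γ) = x (i - 1) ^ m i := by
  simp only [Fpoly, map_add, map_sum, map_mul, map_pow, eval_X, eval_C]
  rw [sum_eq_zero, sum_eq_zero, add_zero, add_zero]
  · intro k hk
    rw [mem_Icc] at hk
    refine mul_eq_zero_of_right _ ?_
    rcases hk.2.lt_or_eq with hk' | rfl
    · by_cases ha : a = 0
      · by_cases hb0 : b = 0
        · subst ha hb0
          have hc : 1 < c := one_lt_of_eq_mul_of_lt (by simpa using hrep) hlt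
          simp only [hx0, zero_mul, tsub_zero, zero_add]
          rw [zero_pow (Nat.mul_ne_zero (by omega) (by omega)), mul_zero]
        · rw [hb hb0, zero_pow (Nat.mul_ne_zero hb0 (by omega))]
          simp only [zero_mul, mul_zero]
      · rw [hx1, zero_pow (Nat.mul_ne_zero ha (by omega))]
        simp only [zero_mul]
    · rw [mul_sub_one_sub_mul_sub_sub_mul_sub_eq h₁ h₂ hlt hrep, hx0, zero_pow (by omega),
        mul_zero]
  · intro k hk
    rw [mem_Icc] at hk
    refine mul_eq_zero_of_right _ ?_
    by_cases hα : α = 0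
    · by_cases hβ0 : β = 0
      · subst hα hβ0
        have hγ : 1 < γ := one_lt_of_eq_mul_of_lt (by simpa using hrep') hlt
        rw [hx0, zero_pow (Nat.mul_ne_zero (by omega) (by omega)), mul_zero]
      · rw [hβ hβ0, zero_pow (Nat.mul_ne_zero (by omega) hβ0)]
        simp only [zero_mul, mul_zero]
    · rw [hx1, zero_pow (Nat.mul_ne_zero (by omega) hα)]
      simp only [zero_mul]

end Fpoly

theorem stmt_9_general {K : Type*} [Field K] (n : ℕ) (hn : 3 ≤ n)
    (m a b c α β γ : ℕ → ℕ)
    (hmono : ∀ i, 1 ≤ i → i < n → m i < m (i + 1))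
    (hrep : ∀ i, 3 ≤ i → i ≤ n →
      m i = c i * m (i - 1) + b i * m 2 + a i * m 1 ∧
      m i + β i * m 2 + α i * m 1 = γ i * m (i - 1) ∧
      a i < m (i - 1) ∧ b i < m (i - 1) ∧ α i < m (i - 1) ∧ β i < m (i - 1) ∧
      β i + α i + 1 ≤ γ i ∧ β i * (m 2 - m 1) ≤ m 1 ∧
      α i = (if a i = 0 then 0 else m (i - 1) - a i) ∧
      β i = (if b i = 0 then 0 else m (i - 1) - b i))
    (hb3 : b 3 = 0) (hβ3 : β 3 = 0)
    (x : ℕ → K) (hx0 : x 0 = 0)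
    (hF1 : x 1 ^ m 2 - x 2 ^ m 1 * x 0 ^ (m 2 - m 1) = 0)
    (hFi : ∀ i, 3 ≤ i → i ≤ n →
      MvPolynomial.eval x (Fpoly K m i (a i) (b i) (c i) (α i) (β i) (γ i)) = 0) :
    ∀ j, 1 ≤ j → j ≤ n - 1 → x j = 0 := by
  have hm : StrictMonoOn m (Set.Icc 1 n) :=
    strictMonoOn_of_lt_succ Set.ordConnected_Icc fun i _ hi hi' => by
      simp only [Order.succ_eq_add_one, Set.mem_Icc] at hi hi'
      exact hmono i hi.1 (by omega)
  have hm12 : m 1 < m 2 := hmono 1 le_rfl (by omega)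
  have hx1 : x 1 = 0 := by
    rw [hx0, zero_pow (by omega), mul_zero, sub_zero] at hF1
    exact pow_eq_zero_iff (by omega) |>.mp hF1
  have hx_sub_one : ∀ i, 3 ≤ i → i ≤ n → (i = 3 ∨ x 2 = 0) → x (i - 1) = 0 := by
    intro i hi hin hx2
    have hlt : m (i - 1) < m i := hm ⟨by omega, by omega⟩ ⟨by omega, hin⟩ (by omega)
    have h₁ : m 1 ≤ m (i - 1) :=
      hm.monotoneOn ⟨le_rfl, by omega⟩ ⟨by omega, by omega⟩ (by omega)
    have h₂ : m 2 ≤ m (i - 1) :=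
      hm.monotoneOn ⟨by omega, by omega⟩ ⟨by omega, by omega⟩ (by omega)
    obtain ⟨hrep₁, hrep₂, -⟩ := hrep i hi hin
    have hb : b i ≠ 0 → x 2 = 0 := fun h => hx2.resolve_left (by rintro rfl; exact h hb3)
    have hβ : β i ≠ 0 → x 2 = 0 := fun h => hx2.resolve_left (by rintro rfl; exact h hβ3)
    have hF := hFi i hi hin
    rw [eval_Fpoly_eq_pow hx0 hx1 hb hβ h₁ h₂ hlt hrep₁ hrep₂] at hF
    exact pow_eq_zero_iff (by omega) |>.mp hF
  have hx2 : x 2 = 0 := hx_sub_one 3 le_rfl hn (Or.inl rfl)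
  intro j hj hjn
  obtain rfl | hj := hj.eq_or_lt
  · exact hx1
  · simpa using hx_sub_one (j + 1) (by omega) (by omega) (Or.inr hx2)

/-- The case `x_0 = 0` in the proof of Theorem 1 of the paper: a common zero
`(0, x_1, …, x_n)` of `F_1 = x_1^{m_2} - x_2^{m_1} x_0^{m_2-m_1}` and
`F_2, …, F_{n-1}` has `x_1 = x_2 = ⋯ = x_{n-1} = 0`; in particular `x_0 = 0`
and `F_1 = 0` already force `x_1 = 0`. -/
theorem stmt_9 {K : Type*} [Field K] (n : ℕ) (hn : 3 ≤ n)
    (m a b c α β γ : ℕ → ℕ)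
    (hpos : ∀ i, 1 ≤ i → i ≤ n → 0 < m i)
    (hmono : ∀ i, 1 ≤ i → i < n → m i < m (i + 1))
    (hgcd : Finset.gcd (Finset.Icc 1 n) m = 1)
    (hrep : ∀ i, 3 ≤ i → i ≤ n →
      m i = c i * m (i - 1) + b i * m 2 + a i * m 1 ∧
      m i + β i * m 2 + α i * m 1 = γ i * m (i - 1) ∧
      a i < m (i - 1) ∧ b i < m (i - 1) ∧ α i < m (i - 1) ∧ β i < m (i - 1) ∧
      β i + α i + 1 ≤ γ i ∧ β i * (m 2 - m 1) ≤ m 1 ∧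
      α i = (if a i = 0 then 0 else m (i - 1) - a i) ∧
      β i = (if b i = 0 then 0 else m (i - 1) - b i))
    (hb3 : b 3 = 0) (hβ3 : β 3 = 0)
    (x : ℕ → K) (hx0 : x 0 = 0)
    (hF1 : x 1 ^ m 2 - x 2 ^ m 1 * x 0 ^ (m 2 - m 1) = 0)
    (hFi : ∀ i, 3 ≤ i → i ≤ n →
      MvPolynomial.eval x (Fpoly K m i (a i) (b i) (c i) (α i) (β i) (γ i)) = 0) :
    ∀ j, 1 ≤ j → j ≤ n - 1 → x j = 0 :=
  stmt_9_general n hn m a b c α β γ hmono hrep hb3 hβ3 x hx0 hF1 hFi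
end

section
/- Let m_1 < m' be positive integers with gcd(m', m_1) = 1, and let m be a positive integer with m ≥ m'·m_1 and m ≥ m'·(m' − m_1). Then there exist nonnegative integers γ and α such that m = γ·m' − α·m_1, α < m', γ ≥ m_1, and γ − α − 1 ≥ 0. -/
/-! Since `m₁` is invertible modulo `m'`, there is a unique residue `α < m'` with
`m' ∣ m + α m₁`; put `γ = (m + α m₁) / m'`. Then `γ m' ≥ m ≥ m' m₁` gives `γ ≥ m₁`, and
`α (m' - m₁) < m' (m' - m₁) ≤ m` gives `α m' < m + α m₁ = γ m'`, i.e. `α < γ`. -/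

theorem Nat.exists_lt_dvd_add_mul_of_coprime {a b : ℕ} (hcop : Nat.Coprime a b) (ha : 0 < a)
    (m : ℕ) : ∃ α < a, a ∣ m + α * b := by
  have : NeZero a := ⟨ha.ne'⟩
  refine ⟨(-(m : ZMod a) * (b : ZMod a)⁻¹).val, ZMod.val_lt _, ?_⟩
  rw [← ZMod.natCast_eq_zero_iff]
  push_cast
  rw [ZMod.natCast_val, ZMod.cast_id, mul_assoc, mul_comm _ (b : ZMod a),
    ZMod.coe_mul_inv_eq_one b hcop.symm]
  ring

theorem Nat.lt_of_add_mul_eq_mul {a b m α γ : ℕ} (h : m + α * b = γ * a) (hα : α < a)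
    (hba : b < a) (hm : a * (a - b) ≤ m) : α < γ := by
  have hαm : α * (a - b) < m :=
    (Nat.mul_lt_mul_of_pos_right hα (Nat.sub_pos_of_lt hba)).trans_le hm
  have hsplit : α * a = α * b + α * (a - b) := by
    rw [← Nat.mul_add, Nat.add_sub_cancel' hba.le]
  exact Nat.lt_of_mul_lt_mul_right (a := a) (by omega)

theorem stmt_13_general (m1 m' m : ℕ) (h1' : m1 < m')
    (hcop : Nat.Coprime m' m1)
    (hge1 : m' * m1 ≤ m) (hge2 : m' * (m' - m1) ≤ m) :
    ∃ γ α : ℕ, m + α * m1 = γ * m' ∧ α < m' ∧ m1 ≤ γ ∧ α + 1 ≤ γ := by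
  have hm' : 0 < m' := by omega
  obtain ⟨α, hα, hdvd⟩ := Nat.exists_lt_dvd_add_mul_of_coprime hcop hm' m
  set γ := (m + α * m1) / m'
  have hγ : m + α * m1 = γ * m' := (Nat.div_mul_cancel hdvd).symm
  have hm1γ : m1 ≤ γ := by
    refine Nat.le_of_mul_le_mul_left ?_ hm'
    rw [mul_comm m' γ, ← hγ]
    omega
  exact ⟨γ, α, hγ, hα, hm1γ, Nat.lt_of_add_mul_eq_mul hγ hα h1' hge2⟩

/-- The arithmetic core of the proof of Proposition 1 of the paper: if
`gcd(m', m₁) = 1`, `m₁ < m'`, and `m ≥ m'·m₁`, `m ≥ m'·(m' - m₁)`, then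
`m = γ·m' - α·m₁` (written additively) for some nonnegative integers `γ, α`
with `α < m'`, `γ ≥ m₁` and `γ - α - 1 ≥ 0`. -/
theorem stmt_13 (m1 m' m : ℕ) (h1 : 0 < m1) (h1' : m1 < m')
    (hcop : Nat.Coprime m' m1) (hm : 0 < m)
    (hge1 : m' * m1 ≤ m) (hge2 : m' * (m' - m1) ≤ m) :
    ∃ γ α : ℕ, m + α * m1 = γ * m' ∧ α < m' ∧ m1 ≤ γ ∧ α + 1 ≤ γ :=
  stmt_13_general m1 m' m h1' hcop hge1 hge2
end
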